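/- arXiv:math/0008152 — 2 statements merged into one kernel-verified Lean document; each statement's English description precedes it below -/
import Mathlib

section
/- For ℓ ≥ 1, there is a size-respecting bijection between partitions fitting inside the (k,ℓ)-hook containing the cell (k+1,ℓ) and pairs (μ,ν) where μ has at most k parts and ν has at most ℓ parts; the bijection subtracts the ℓ×(k+1) rectangle appropriately, so the generating function for such partitions is t^{ℓ(k+1)} G_k(t) G_ℓ(t). -/
open PowerSeries Finset

/-- A partition fits inside the `(k,ℓ)`-hook iff at most `k` of its parts exceed `ℓ`,
i.e. `λ_{k+i} ≤ ℓ` for all `i ≥ 1`. -/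
def InHook (k l : ℕ) {n : ℕ} (p : Nat.Partition n) : Prop :=
  (p.parts.filter (fun x => l < x)).card ≤ k

/-- `λ` contains the cell `(k+1, ℓ)` iff `λ_{k+1} ≥ ℓ`, i.e. at least `k+1` parts are `≥ ℓ`. -/
def ContainsCell (k l : ℕ) {n : ℕ} (p : Nat.Partition n) : Prop :=
  k + 1 ≤ (p.parts.filter (fun x => l ≤ x)).card

/-- `G_m(t) = ∏_{i=1}^m 1/(1-t^i)`. -/
noncomputable def Gm (m : ℕ) : PowerSeries ℚ :=
  ∏ i ∈ Finset.Icc 1 m, (1 - (PowerSeries.X : PowerSeries ℚ) ^ i)⁻¹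

/-! Since `λ` has at most `k` parts `> ℓ` but at least `k + 1` parts `≥ ℓ`, its `(k+1)`-st row has
length exactly `ℓ`, so `λ` contains the `(k+1) × ℓ` rectangle and nothing to the right of it below
row `k`. Removing the rectangle leaves the rows to its right, a partition `μ` with at most `k`
parts, and the rows below it, a partition with parts `≤ ℓ` whose conjugate `ν` has at most `ℓ`
parts; gluing inverts this. Counting by size, the generating function is `t^{ℓ(k+1)}` times the
series of `μ` and of `ν`, and `G_m` counts the partitions with parts `≤ m`, equivalently (by
conjugation) those with at most `m` parts. -/

namespace YoungDiagram

theorem sum_rowLens (μ : YoungDiagram) : μ.rowLens.sum = μ.card := by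
  have hrows : ∀ c ∈ μ.cells, c.1 ∈ Finset.range (μ.colLen 0) := fun c hc => by
    rw [Finset.mem_range, ← mem_iff_lt_colLen]
    exact μ.up_left_mem le_rfl (Nat.zero_le _) hc
  have hsum : μ.rowLens.sum = ∑ i ∈ Finset.range (μ.colLen 0), μ.rowLen i := by
    simp [rowLens, Finset.sum_eq_multiset_sum, Finset.range, Multiset.range]
  rw [YoungDiagram.card, Finset.card_eq_sum_card_fiberwise hrows, hsum]
  exact Finset.sum_congr rfl fun i _ => rowLen_eq_card μ

theorem card_transpose (μ : YoungDiagram) : μ.transpose.card = μ.card := by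
  simp [YoungDiagram.card, transpose]

theorem rowLen_zero_le_iff {μ : YoungDiagram} {m : ℕ} :
    μ.rowLen 0 ≤ m ↔ ∀ x ∈ μ.rowLens, x ≤ m := by
  constructor
  · intro h x hx
    obtain ⟨i, -, rfl⟩ := List.mem_map.1 hx
    exact (μ.rowLen_anti 0 i (Nat.zero_le i)).trans h
  · intro h
    rcases Nat.eq_zero_or_pos (μ.colLen 0) with h0 | h0
    · have : (0, 0) ∉ μ := by rw [mem_iff_lt_colLen, h0]; exact lt_irrefl 0
      rw [mem_iff_lt_rowLen, not_lt, Nat.le_zero] at this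
      rw [this]
      exact Nat.zero_le m
    · exact h _ (List.mem_map_of_mem (List.mem_range.2 h0))

theorem ofRowLens_congr {w w' : List ℕ} (hw : w.SortedGE) (hw' : w'.SortedGE) (h : w = w') :
    ofRowLens w hw = ofRowLens w' hw' := by
  subst h; rfl

end YoungDiagram

namespace Nat.Partition

open YoungDiagram

def youngDiagramOf (s : Multiset ℕ) : YoungDiagram :=
  ofRowLens (s.sort (· ≥ ·)) (s.pairwise_sort _).sortedGE

theorem coe_rowLens_youngDiagramOf {s : Multiset ℕ} (hs : ∀ x ∈ s, 0 < x) :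
    ((youngDiagramOf s).rowLens : Multiset ℕ) = s := by
  rw [youngDiagramOf, rowLens_ofRowLens_eq_self fun x hx => hs x ((Multiset.mem_sort _).1 hx),
    Multiset.sort_eq]

theorem youngDiagramOf_coe_rowLens (μ : YoungDiagram) :
    youngDiagramOf (μ.rowLens : Multiset ℕ) = μ := by
  have hsort : (μ.rowLens : Multiset ℕ).sort (· ≥ ·) = μ.rowLens :=
    List.Perm.eq_of_sortedGE (Multiset.pairwise_sort _ _).sortedGE (rowLens_sorted μ)
      (Multiset.coe_eq_coe.1 (Multiset.sort_eq _ _))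
  rw [youngDiagramOf, ofRowLens_congr _ (rowLens_sorted μ) hsort, ofRowLens_to_rowLens_eq_self]

-- Conjugation acts on bare multisets of parts, so that it does not see the index `n`.
def conjParts (s : Multiset ℕ) : Multiset ℕ :=
  ((youngDiagramOf s).transpose.rowLens : Multiset ℕ)

theorem pos_of_mem_conjParts {s : Multiset ℕ} {x : ℕ} (hx : x ∈ conjParts s) : 0 < x :=
  pos_of_mem_rowLens _ x hx

theorem conjParts_conjParts {s : Multiset ℕ} (hs : ∀ x ∈ s, 0 < x) :
    conjParts (conjParts s) = s := by
  rw [conjParts, conjParts, youngDiagramOf_coe_rowLens, transpose_transpose,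
    coe_rowLens_youngDiagramOf hs]

theorem sum_conjParts {s : Multiset ℕ} (hs : ∀ x ∈ s, 0 < x) : (conjParts s).sum = s.sum := by
  conv_rhs => rw [← coe_rowLens_youngDiagramOf hs]
  rw [conjParts, Multiset.sum_coe, Multiset.sum_coe, sum_rowLens, sum_rowLens, card_transpose]

theorem card_conjParts_le_iff {s : Multiset ℕ} (hs : ∀ x ∈ s, 0 < x) {m : ℕ} :
    Multiset.card (conjParts s) ≤ m ↔ ∀ x ∈ s, x ≤ m := by
  rw [conjParts, Multiset.coe_card, length_rowLens, colLen_transpose, rowLen_zero_le_iff]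
  conv_rhs => rw [← coe_rowLens_youngDiagramOf hs]
  rfl

theorem forall_mem_conjParts_le_iff {s : Multiset ℕ} (hs : ∀ x ∈ s, 0 < x) {m : ℕ} :
    (∀ x ∈ conjParts s, x ≤ m) ↔ Multiset.card s ≤ m := by
  rw [← card_conjParts_le_iff fun _ => pos_of_mem_conjParts, conjParts_conjParts hs]

def conj {n : ℕ} (p : Nat.Partition n) : Nat.Partition n where
  parts := conjParts p.parts
  parts_pos := pos_of_mem_conjParts
  parts_sum := by rw [sum_conjParts fun _ => p.parts_pos, p.parts_sum]

theorem conj_involutive {n : ℕ} : Function.Involutive (conj (n := n)) := fun p =>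
  Nat.Partition.ext (conjParts_conjParts fun _ => p.parts_pos)

def sigmaOfParts (s : Multiset ℕ) (hs : ∀ x ∈ s, 0 < x) : Σ n, Nat.Partition n :=
  ⟨s.sum, ⟨s, hs _, rfl⟩⟩

theorem sigma_ext {x y : Σ n, Nat.Partition n} (h : x.2.parts = y.2.parts) : x = y := by
  obtain ⟨n, p⟩ := x
  obtain ⟨m, q⟩ := y
  obtain rfl : n = m := by rw [← p.parts_sum, ← q.parts_sum, h]
  exact congrArg (Sigma.mk n) (Nat.Partition.ext h)

end Nat.Partition

def Equiv.subtypeSigmaFiber {γ : ℕ → Type*} (P : (Σ n, γ n) → Prop) (n : ℕ) :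
    {x : {s : Σ n, γ n // P s} // x.1.1 = n} ≃ {c : γ n // P ⟨n, c⟩} where
  toFun := fun ⟨⟨⟨_, c⟩, hc⟩, hn⟩ => hn ▸ ⟨c, hc⟩
  invFun c := ⟨⟨⟨n, c.1⟩, c.2⟩, rfl⟩
  left_inv := by rintro ⟨⟨⟨_, c⟩, hc⟩, rfl⟩; rfl
  right_inv _ := rfl

namespace PowerSeries

variable (R : Type*) [CommSemiring R] {α β : Type*}

noncomputable def weightGF (w : α → ℕ) : R⟦X⟧ :=
  mk fun n => (Nat.card {a // w a = n} : R)

variable {R}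

theorem weightGF_congr {wα : α → ℕ} {wβ : β → ℕ} (e : α ≃ β) (h : ∀ a, wβ (e a) = wα a) :
    weightGF R wα = weightGF R wβ := by
  ext n
  simp only [weightGF, coeff_mk]
  exact congrArg _ (Nat.card_congr (e.subtypeEquiv fun a => by rw [h]))

theorem weightGF_const_add (L : ℕ) (w : α → ℕ) :
    weightGF R (fun a => L + w a) = X ^ L * weightGF R w := by
  ext n
  rw [coeff_X_pow_mul', weightGF, weightGF, coeff_mk]
  split_ifs with hn
  · rw [coeff_mk]
    exact congrArg _ (Nat.card_congr (Equiv.subtypeEquivRight fun a => by omega))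
  · have : IsEmpty {a // L + w a = n} := ⟨fun a => hn (a.2 ▸ Nat.le_add_right L (w a.1))⟩
    rw [Nat.card_of_isEmpty, Nat.cast_zero]

theorem weightGF_prod (wα : α → ℕ) (wβ : β → ℕ) [∀ n, Finite {a // wα a = n}]
    [∀ n, Finite {b // wβ b = n}] :
    weightGF R (fun p : α × β => wα p.1 + wβ p.2) = weightGF R wα * weightGF R wβ := by
  ext n
  let e : {p : α × β // wα p.1 + wβ p.2 = n} ≃
      Σ ij : antidiagonal n, {a // wα a = ij.1.1} × {b // wβ b = ij.1.2} :=
    { toFun p := ⟨⟨(wα p.1.1, wβ p.1.2), mem_antidiagonal.2 p.2⟩, ⟨p.1.1, rfl⟩, ⟨p.1.2, rfl⟩⟩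
      invFun q := ⟨(q.2.1, q.2.2), by rw [q.2.1.2, q.2.2.2]; exact mem_antidiagonal.1 q.1.2⟩
      left_inv _ := rfl
      right_inv := by
        rintro ⟨⟨⟨i, j⟩, hij⟩, ⟨a, ha : wα a = i⟩, ⟨b, hb : wβ b = j⟩⟩
        subst ha hb
        rfl }
  rw [coeff_mul, weightGF, coeff_mk, Nat.card_congr e, Nat.card_sigma, Nat.cast_sum,
    ← Finset.sum_coe_sort (antidiagonal n)]
  simp only [Nat.card_prod, Nat.cast_mul, weightGF, coeff_mk]

instance {γ : ℕ → Type*} [∀ n, Finite (γ n)] (P : (Σ n, γ n) → Prop) (n : ℕ) :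
    Finite {x : {s : Σ n, γ n // P s} // x.1.1 = n} :=
  Finite.of_equiv _ (Equiv.subtypeSigmaFiber P n).symm

theorem weightGF_sigma_fst {γ : ℕ → Type*} (P : (Σ n, γ n) → Prop) :
    weightGF R (fun x : {s : Σ n, γ n // P s} => x.1.1)
      = mk fun n => (Nat.card {c : γ n // P ⟨n, c⟩} : R) := by
  ext n
  simp only [weightGF, coeff_mk]
  exact congrArg _ (Nat.card_congr (Equiv.subtypeSigmaFiber P n))

end PowerSeries

namespace HookDecomposition

open Multiset

variable (k l : ℕ)

/- A partition with `λ_{k+1} = l` splits into the `(k+1) × l` rectangle, the rows to its right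
(`rectRight`, each shortened by `l`) and the rows below it (`rectBelow`: the parts `≤ l` other than
the `k + 1 - #{parts > l}` rectangle rows of length exactly `l`); `rectGlue` reassembles them. -/
def rectRight (s : Multiset ℕ) : Multiset ℕ :=
  (s.filter (l < ·)).map (· - l)

def rectBelow (s : Multiset ℕ) : Multiset ℕ :=
  s.filter (· ≤ l) - replicate (k + 1 - card (s.filter (l < ·))) l

def rectGlue (m w : Multiset ℕ) : Multiset ℕ :=
  m.map (· + l) + replicate (k + 1 - card m) l + w

variable {k l}

theorem card_filter_le_eq_add_count (s : Multiset ℕ) :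
    card (s.filter (l ≤ ·)) = card (s.filter (l < ·)) + count l s := by
  induction s using Multiset.induction_on with
  | empty => simp
  | cons a s ih =>
    simp only [Multiset.filter_cons, Multiset.card_add, Multiset.count_cons, ih]
    split_ifs <;> simp_all <;> omega

theorem rectGlue_rectRight_rectBelow {s : Multiset ℕ}
    (hs : k + 1 ≤ card (s.filter (l ≤ ·))) :
    rectGlue k l (rectRight l s) (rectBelow k l s) = s := by
  have hfill : replicate (k + 1 - card (s.filter (l < ·))) l ≤ s.filter (· ≤ l) := by
    rw [← Multiset.le_count_iff_replicate_le, Multiset.count_filter_of_pos (p := (· ≤ l)) le_rfl]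
    have := card_filter_le_eq_add_count (l := l) s
    omega
  have hright : (rectRight l s).map (· + l) = s.filter (l < ·) := by
    rw [rectRight, Multiset.map_map]
    conv_rhs => rw [← Multiset.map_id (s.filter (l < ·))]
    exact Multiset.map_congr rfl fun x hx => Nat.sub_add_cancel (Multiset.of_mem_filter hx).le
  rw [rectGlue, rectBelow, hright, rectRight, Multiset.card_map, add_assoc,
    add_tsub_cancel_of_le hfill]
  conv_rhs => rw [← Multiset.filter_add_not (l < ·) s]
  simp only [not_lt]

theorem filter_lt_rectGlue {m w : Multiset ℕ} (hm : ∀ x ∈ m, 0 < x) (hw : ∀ x ∈ w, x ≤ l) :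
    (rectGlue k l m w).filter (l < ·) = m.map (· + l) := by
  rw [rectGlue, Multiset.filter_add, Multiset.filter_add, Multiset.filter_eq_self.2,
    Multiset.filter_eq_nil.2, Multiset.filter_eq_nil.2, add_zero, add_zero]
  · exact fun x hx => (hw x hx).not_gt
  · exact fun x hx => (Multiset.eq_of_mem_replicate hx).symm ▸ lt_irrefl l
  · intro x hx
    obtain ⟨a, ha, rfl⟩ := Multiset.mem_map.1 hx
    have := hm a ha
    omega

theorem filter_le_rectGlue {m w : Multiset ℕ} (hm : ∀ x ∈ m, 0 < x) (hw : ∀ x ∈ w, x ≤ l) :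
    (rectGlue k l m w).filter (· ≤ l) = replicate (k + 1 - card m) l + w := by
  rw [rectGlue, Multiset.filter_add, Multiset.filter_add, Multiset.filter_eq_nil.2,
    Multiset.filter_eq_self.2, Multiset.filter_eq_self.2, zero_add]
  · exact hw
  · exact fun x hx => (Multiset.eq_of_mem_replicate hx).le
  · intro x hx
    obtain ⟨a, ha, rfl⟩ := Multiset.mem_map.1 hx
    have := hm a ha
    omega

theorem rectRight_rectGlue {m w : Multiset ℕ} (hm : ∀ x ∈ m, 0 < x) (hw : ∀ x ∈ w, x ≤ l) :
    rectRight l (rectGlue k l m w) = m := by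
  rw [rectRight, filter_lt_rectGlue hm hw, Multiset.map_map]
  conv_rhs => rw [← Multiset.map_id m]
  exact Multiset.map_congr rfl fun x _ => Nat.add_sub_cancel x l

theorem rectBelow_rectGlue {m w : Multiset ℕ} (hm : ∀ x ∈ m, 0 < x) (hw : ∀ x ∈ w, x ≤ l) :
    rectBelow k l (rectGlue k l m w) = w := by
  rw [rectBelow, filter_le_rectGlue hm hw, filter_lt_rectGlue hm hw, Multiset.card_map,
    add_tsub_cancel_left]

theorem sum_rectGlue {m : Multiset ℕ} (hm : card m ≤ k + 1) (w : Multiset ℕ) :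
    (rectGlue k l m w).sum = l * (k + 1) + m.sum + w.sum := by
  have hshift : (m.map (· + l)).sum = m.sum + card m * l := by
    rw [Multiset.sum_map_add, Multiset.map_id', Multiset.map_const', Multiset.sum_replicate,
      smul_eq_mul]
  rw [rectGlue, Multiset.sum_add, Multiset.sum_add, hshift, Multiset.sum_replicate, smul_eq_mul]
  have : card m * l + (k + 1 - card m) * l = l * (k + 1) := by
    rw [← add_mul, Nat.add_sub_cancel' hm, mul_comm]
  omega

theorem card_filter_le_rectGlue (m w : Multiset ℕ) :
    k + 1 ≤ card ((rectGlue k l m w).filter (l ≤ ·)) := by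
  have hle : m.map (· + l) + replicate (k + 1 - card m) l ≤ rectGlue k l m w :=
    Multiset.le_add_right _ _
  calc k + 1 ≤ card (m.map (· + l) + replicate (k + 1 - card m) l) := by
        rw [Multiset.card_add, Multiset.card_map, Multiset.card_replicate]; omega
    _ = card ((m.map (· + l) + replicate (k + 1 - card m) l).filter (l ≤ ·)) := by
        rw [Multiset.filter_eq_self.2]
        intro x hx
        rcases Multiset.mem_add.1 hx with hx | hx
        · obtain ⟨a, -, rfl⟩ := Multiset.mem_map.1 hx
          exact Nat.le_add_left l a
        · exact (Multiset.eq_of_mem_replicate hx).ge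
    _ ≤ _ := Multiset.card_le_card (Multiset.filter_le_filter _ hle)

theorem pos_of_mem_rectRight {s : Multiset ℕ} {x : ℕ} (hx : x ∈ rectRight l s) : 0 < x := by
  obtain ⟨a, ha, rfl⟩ := Multiset.mem_map.1 hx
  have := Multiset.of_mem_filter ha
  omega

theorem mem_of_mem_rectBelow {s : Multiset ℕ} {x : ℕ} (hx : x ∈ rectBelow k l s) :
    x ∈ s ∧ x ≤ l :=
  Multiset.mem_filter.1 (Multiset.mem_of_le tsub_le_self hx)

theorem pos_of_mem_rectGlue (hl : 0 < l) {m w : Multiset ℕ} (hw : ∀ x ∈ w, 0 < x) {x : ℕ}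
    (hx : x ∈ rectGlue k l m w) : 0 < x := by
  rcases Multiset.mem_add.1 hx with hx | hx
  · rcases Multiset.mem_add.1 hx with hx | hx
    · obtain ⟨a, -, rfl⟩ := Multiset.mem_map.1 hx
      omega
    · exact (Multiset.eq_of_mem_replicate hx).symm ▸ hl
  · exact hw x hx

open Nat.Partition

variable (k l) in
abbrev HookCellPartition : Type :=
  {pp : Σ n : ℕ, Nat.Partition n // InHook k l pp.2 ∧ ContainsCell k l pp.2}

abbrev LengthAtMost (m : ℕ) : Type := {a : Σ n : ℕ, Nat.Partition n // a.2.parts.card ≤ m}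

variable (k l) in
abbrev BoundedLengthPair : Type :=
  {qq : (Σ m : ℕ, Nat.Partition m) × (Σ r : ℕ, Nat.Partition r) //
    qq.1.2.parts.card ≤ k ∧ qq.2.2.parts.card ≤ l}

def toPair (x : HookCellPartition k l) : BoundedLengthPair k l :=
  ⟨(sigmaOfParts (rectRight l x.1.2.parts) fun _ => pos_of_mem_rectRight,
      sigmaOfParts (conjParts (rectBelow k l x.1.2.parts)) fun _ => pos_of_mem_conjParts),
    by simpa [sigmaOfParts, rectRight, InHook] using x.2.1,
    (card_conjParts_le_iff fun _ hy => x.1.2.parts_pos (mem_of_mem_rectBelow hy).1).2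
      fun _ hy => (mem_of_mem_rectBelow hy).2⟩

def ofPair (hl : 0 < l) (y : BoundedLengthPair k l) : HookCellPartition k l :=
  ⟨sigmaOfParts (rectGlue k l y.1.1.2.parts (conjParts y.1.2.2.parts))
      fun _ => pos_of_mem_rectGlue hl fun _ => pos_of_mem_conjParts,
    by
      rw [InHook, sigmaOfParts, filter_lt_rectGlue (fun _ => y.1.1.2.parts_pos)
        ((forall_mem_conjParts_le_iff fun _ => y.1.2.2.parts_pos).2 y.2.2), Multiset.card_map]
      exact y.2.1,
    card_filter_le_rectGlue _ _⟩

def hookEquiv (hl : 0 < l) : HookCellPartition k l ≃ BoundedLengthPair k l where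
  toFun := toPair
  invFun := ofPair hl
  left_inv x := by
    refine Subtype.ext (sigma_ext ?_)
    change rectGlue k l _ (conjParts (conjParts _)) = _
    rw [conjParts_conjParts fun _ hy => x.1.2.parts_pos (mem_of_mem_rectBelow hy).1]
    exact rectGlue_rectRight_rectBelow x.2.2
  right_inv y := by
    have hμ : ∀ x ∈ y.1.1.2.parts, 0 < x := fun _ => y.1.1.2.parts_pos
    have hν : ∀ x ∈ conjParts y.1.2.2.parts, x ≤ l :=
      (forall_mem_conjParts_le_iff fun _ => y.1.2.2.parts_pos).2 y.2.2
    refine Subtype.ext (Prod.ext (sigma_ext ?_) (sigma_ext ?_))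
    · exact rectRight_rectGlue hμ hν
    · change conjParts (rectBelow k l (rectGlue k l _ _)) = _
      rw [rectBelow_rectGlue hμ hν, conjParts_conjParts fun _ => y.1.2.2.parts_pos]

theorem size_hookEquiv (hl : 0 < l) (x : HookCellPartition k l) :
    x.1.1 = l * (k + 1) + (hookEquiv hl x).1.1.1 + (hookEquiv hl x).1.2.1 := by
  have hcard : Multiset.card (rectRight l x.1.2.parts) ≤ k + 1 := by
    rw [rectRight, Multiset.card_map]
    exact x.2.1.trans k.le_succ
  change x.1.1 = l * (k + 1) + (rectRight l x.1.2.parts).sum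
    + (conjParts (rectBelow k l x.1.2.parts)).sum
  rw [sum_conjParts fun _ hy => x.1.2.parts_pos (mem_of_mem_rectBelow hy).1, ← sum_rectGlue hcard,
    rectGlue_rectRight_rectBelow x.2.2, x.1.2.parts_sum]

variable {R : Type*} [CommSemiring R]

theorem weightGF_hookCellPartition (hl : 0 < l) :
    weightGF R (fun x : HookCellPartition k l => x.1.1)
      = X ^ (l * (k + 1)) * weightGF R (fun y : BoundedLengthPair k l => y.1.1.1 + y.1.2.1) := by
  rw [← weightGF_const_add]
  exact weightGF_congr (hookEquiv hl) fun x => by rw [size_hookEquiv hl x, add_assoc]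

theorem weightGF_boundedLengthPair :
    weightGF R (fun y : BoundedLengthPair k l => y.1.1.1 + y.1.2.1)
      = (mk fun n => (Nat.card {μ : Nat.Partition n // μ.parts.card ≤ k} : R))
        * mk fun n => (Nat.card {ν : Nat.Partition n // ν.parts.card ≤ l} : R) := by
  calc _ = weightGF R (fun p : LengthAtMost k × LengthAtMost l => p.1.1.1 + p.2.1.1) :=
        weightGF_congr Equiv.subtypeProdEquivProd fun _ => rfl
    _ = _ := by
      rw [weightGF_prod (fun a : LengthAtMost k => a.1.1) (fun b : LengthAtMost l => b.1.1),
        weightGF_sigma_fst, weightGF_sigma_fst]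

end HookDecomposition

open scoped PowerSeries.WithPiTopology in
theorem PowerSeries.tsum_X_pow_mul_eq_inv {K : Type*} [Field K] [TopologicalSpace K]
    [IsTopologicalRing K] [T2Space K] {i : ℕ} (hi : 0 < i) :
    ∑' j, (X : K⟦X⟧) ^ (i * j) = (1 - X ^ i)⁻¹ := by
  rw [PowerSeries.eq_inv_iff_mul_eq_one (by simp [hi.ne'])]
  simp_rw [pow_mul]
  exact WithPiTopology.tsum_pow_mul_one_sub_of_constantCoeff_eq_zero (by simp [hi.ne'])

open scoped PowerSeries.WithPiTopology in
theorem Gm_eq_mk_card_restricted (m : ℕ) :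
    Gm m = mk fun n => (#(Nat.Partition.restricted n (· ≤ m)) : ℚ) := by
  have hfin := hasProd_prod_of_ne_finset_one (s := range m)
    (L := SummationFilter.unconditional ℕ)
    (f := fun i => if i + 1 ≤ m then ∑' j, (X : ℚ⟦X⟧) ^ ((i + 1) * j) else 1)
    fun i hi => if_neg (by simpa using hi)
  rw [(Nat.Partition.hasProd_powerSeriesMk_card_restricted ℚ (· ≤ m)).unique hfin, Gm,
    range_eq_Ico, ← Ico_add_one_right_eq_Icc, ← prod_Ico_add' _ 0 m 1]
  refine prod_congr rfl fun i hi => ?_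
  rw [if_pos (show i + 1 ≤ m from (mem_Ico.1 hi).2), PowerSeries.tsum_X_pow_mul_eq_inv i.succ_pos]

theorem card_restricted_le_eq_card_length_le (n m : ℕ) :
    #(Nat.Partition.restricted n (· ≤ m))
      = Nat.card {p : Nat.Partition n // p.parts.card ≤ m} := by
  rw [Nat.Partition.restricted, ← Fintype.card_subtype, ← Nat.card_eq_fintype_card]
  exact Nat.card_congr (Nat.Partition.conj_involutive.toPerm _ |>.subtypeEquiv fun p =>
    (Nat.Partition.forall_mem_conjParts_le_iff fun _ => p.parts_pos).symm).symm

theorem Gm_eq_mk_card_length_le (m : ℕ) :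
    Gm m = mk fun n => (Nat.card {p : Nat.Partition n // p.parts.card ≤ m} : ℚ) := by
  simp_rw [Gm_eq_mk_card_restricted, card_restricted_le_eq_card_length_le]

theorem stmt12 (k l : ℕ) (hl : 1 ≤ l) :
    (∃ e : {pp : Σ n : ℕ, Nat.Partition n // InHook k l pp.2 ∧ ContainsCell k l pp.2}
            ≃ {qq : (Σ m : ℕ, Nat.Partition m) × (Σ r : ℕ, Nat.Partition r) //
                qq.1.2.parts.card ≤ k ∧ qq.2.2.parts.card ≤ l},
        ∀ x, x.val.1 = l * (k + 1) + (e x).val.1.1 + (e x).val.2.1) ∧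
    (PowerSeries.mk fun n =>
        (Nat.card {p : Nat.Partition n // InHook k l p ∧ ContainsCell k l p} : ℚ))
      = (PowerSeries.X : PowerSeries ℚ) ^ (l * (k + 1)) * Gm k * Gm l := by
  refine ⟨⟨HookDecomposition.hookEquiv hl, HookDecomposition.size_hookEquiv hl⟩, ?_⟩
  rw [Gm_eq_mk_card_length_le, Gm_eq_mk_card_length_le, mul_assoc,
    ← HookDecomposition.weightGF_boundedLengthPair (R := ℚ),
    ← HookDecomposition.weightGF_hookCellPartition (R := ℚ) hl]
  exact Eq.symm (weightGF_sigma_fst _)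
end

section
/- For k ≥ 0, A^{k,1}(t) = 1 + t^{k+2} · [k choose 1]_t = 1 + t^{k+2}(1 + t + ... + t^{k-1}), and consequently the generating function for partitions inside the (k,1)-hook is (1 + t^{k+2}(1-t^k)/(1-t)) · ∏_{i=1}^{k+1} 1/(1-t^i). -/
open PowerSeries Finset

/-- The `t`-Pochhammer symbol `(t;t)_n = ∏_{j=0}^{n-1} (1 - t·t^j)`. -/
noncomputable def qPoch (n : ℕ) : PowerSeries ℚ :=
  ∏ j ∈ Finset.range n, (1 - (PowerSeries.X : PowerSeries ℚ) ^ (j + 1))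

/-- The Gaussian binomial coefficient `[a choose b]_t = (t;t)_a / ((t;t)_b (t;t)_{a-b})`,
with the convention that it is `0` when `b > a`. -/
noncomputable def gaussBinom (a b : ℕ) : PowerSeries ℚ :=
  if b ≤ a then qPoch a * (qPoch b)⁻¹ * (qPoch (a - b))⁻¹ else 0

/-- `A^{k,ℓ}(t) = 1 + ∑_{i=1}^{ℓ} t^{i(k+ℓ+1)} [k choose i]_t
∑_{j=0}^{ℓ-i} t^{j(k-i+1)} [(i+j-1) choose j]_t`. -/
noncomputable def A (k l : ℕ) : PowerSeries ℚ :=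
  1 + ∑ i ∈ Finset.Icc 1 l,
    (PowerSeries.X : PowerSeries ℚ) ^ (i * (k + l + 1)) * gaussBinom k i *
      ∑ j ∈ Finset.range (l - i + 1),
        (PowerSeries.X : PowerSeries ℚ) ^ (j * (k - i + 1)) * gaussBinom (i + j - 1) j

/-- `G_{k,ℓ}(t) = ∑_λ t^{|λ|}` over partitions fitting inside the `(k,ℓ)`-hook. -/
noncomputable def hookGF (k l : ℕ) : PowerSeries ℚ :=
  PowerSeries.mk fun n => (Nat.card {p : Nat.Partition n // InHook k l p} : ℚ)
/-!
A partition lies in the `(k,1)`-hook iff at most `k` of its parts exceed `1`. Sort the partitions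
by the number `j ≤ k` of such parts. Deleting the parts equal to `1` accounts for a factor
`1/(1-t)`, and subtracting `2` from each of the `j` large parts leaves an arbitrary partition into
at most `j` parts, whose generating function is `1/(t;t)_j` (delete the first column and recurse
on `j`). So the `j`-th class has generating function `t^{2j}/((1-t)(t;t)_j)`, and summing over
`j ≤ k` gives the closed form by induction on `k`. The identity for `A^{k,1}` is a direct
evaluation, `[k choose 1]_t = (1-t^k)/(1-t)`.
-/

lemma constantCoeff_one_sub_X_pow {R : Type*} [Ring R] {i : ℕ} (hi : i ≠ 0) :
    constantCoeff (1 - X ^ i : R⟦X⟧) = 1 := by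
  simp [zero_pow hi]

lemma one_sub_X_pow_mul_inv {k : Type*} [Field k] {i : ℕ} (hi : i ≠ 0) :
    (1 - X ^ i : k⟦X⟧) * (1 - X ^ i)⁻¹ = 1 :=
  PowerSeries.mul_inv_cancel _ (by simp [constantCoeff_one_sub_X_pow hi])

lemma PowerSeries.mk_eq_X_pow_mul {R : Type*} [Semiring R] {f : ℕ → R} {g : R⟦X⟧} {d : ℕ}
    (hlt : ∀ n < d, f n = 0) (hadd : ∀ n, f (n + d) = coeff n g) : mk f = X ^ d * g := by
  ext n
  rw [coeff_mk, coeff_X_pow_mul']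
  split_ifs with h
  · obtain ⟨m, rfl⟩ := Nat.exists_eq_add_of_le' h
    rw [hadd, Nat.add_sub_cancel]
  · exact hlt n (not_le.1 h)

lemma qPoch_zero : qPoch 0 = 1 := prod_range_zero _

lemma qPoch_succ (n : ℕ) : qPoch (n + 1) = qPoch n * (1 - X ^ (n + 1)) :=
  prod_range_succ _ _

lemma qPoch_one : qPoch 1 = 1 - X := by
  rw [qPoch_succ, qPoch_zero, one_mul, zero_add, pow_one]

lemma qPoch_mul_inv (n : ℕ) : qPoch n * (qPoch n)⁻¹ = 1 :=
  PowerSeries.mul_inv_cancel _ <| by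
    simp [qPoch, map_prod, constantCoeff_one_sub_X_pow]

lemma gaussBinom_zero_right (a : ℕ) : gaussBinom a 0 = 1 := by
  simp [gaussBinom, qPoch_zero, qPoch_mul_inv]

lemma gaussBinom_one_right (a : ℕ) : gaussBinom a 1 = ∑ j ∈ range a, (X : ℚ⟦X⟧) ^ j := by
  rcases a with _ | m
  · simp [gaussBinom]
  have hq : qPoch (m + 1) = qPoch m * ((1 - X) * ∑ j ∈ range (m + 1), (X : ℚ⟦X⟧) ^ j) := by
    rw [qPoch_succ, ← mul_neg_geom_sum]
  have hX : (1 - X : ℚ⟦X⟧) * (1 - X)⁻¹ = 1 := by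
    simpa only [pow_one] using one_sub_X_pow_mul_inv (k := ℚ) one_ne_zero
  rw [gaussBinom, if_pos (by omega), Nat.add_sub_cancel, hq, qPoch_one]
  linear_combination (∑ j ∈ range (m + 1), (X : ℚ⟦X⟧) ^ j) *
    ((1 - X) * (1 - X)⁻¹ * qPoch_mul_inv m + hX)

lemma A_one_right (k : ℕ) : A k 1 = 1 + X ^ (k + 2) * gaussBinom k 1 := by
  simp [A, gaussBinom_zero_right]

lemma Finset.card_filter_le_succ {α : Type*} (s : Finset α) (f : α → ℕ) (j : ℕ) :
    #{a ∈ s | f a ≤ j + 1} = #{a ∈ s | f a ≤ j} + #{a ∈ s | f a = j + 1} := by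
  rw [← card_filter_add_card_filter_not (s := {a ∈ s | f a ≤ j + 1}) (fun a => f a ≤ j),
    filter_filter, filter_filter]
  congr 2 <;> exact filter_congr fun a _ => by omega

lemma Multiset.filter_not_lt_eq_replicate {c : ℕ} (s : Multiset ℕ) (h : ∀ x ∈ s, c ≤ x) :
    s.filter (¬ c < ·) = replicate (s.filter (¬ c < ·)).card c :=
  eq_replicate_card.2 fun x hx => by
    have := h x (mem_of_mem_filter hx)
    have := of_mem_filter hx
    omega

lemma Multiset.filter_ne_zero_map_tsub {c : ℕ} (s : Multiset ℕ) (h : ∀ x ∈ s, c ≤ x) :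
    (s.map (· - c)).filter (· ≠ 0) = (s.filter (c < ·)).map (· - c) := by
  rw [filter_map]
  exact congrArg _ (filter_congr fun x hx => by
    have := h x hx
    simp only [Function.comp_apply]
    omega)

lemma Multiset.map_add_map_tsub_filter_lt (c : ℕ) (s : Multiset ℕ) :
    ((s.filter (c < ·)).map (· - c)).map (· + c) = s.filter (c < ·) := by
  rw [map_map]
  exact (map_congr rfl fun x hx => by
    have := of_mem_filter hx
    simp only [Function.comp_apply]
    omega).trans (map_id' _)

namespace Nat.Partition

lemma card_parts_nsmul_le {n c : ℕ} (p : n.Partition) (h : ∀ x ∈ p.parts, c ≤ x) :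
    p.parts.card • c ≤ n :=
  (Multiset.card_nsmul_le_sum h).trans_eq p.parts_sum

def subNatPartsEquiv {c : ℕ} (hc : 0 < c) (j n : ℕ) :
    {p : (n + c * j).Partition // p.parts.card = j ∧ ∀ x ∈ p.parts, c ≤ x} ≃
      {q : n.Partition // q.parts.card ≤ j} where
  toFun p := ⟨ofSums n (p.1.parts.map (· - c)) (by
      rw [Multiset.sum_map_tsub _ p.2.2, Multiset.map_id', p.1.parts_sum, Multiset.map_const',
        Multiset.sum_replicate, p.2.1, smul_eq_mul, mul_comm, Nat.add_sub_cancel]),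
    p.2.1 ▸ (Multiset.card_le_card (Multiset.filter_le _ _)).trans (Multiset.card_map _ _).le⟩
  invFun q :=
    have hge : ∀ x ∈ q.1.parts.map (· + c) + Multiset.replicate (j - q.1.parts.card) c, c ≤ x := by
      simp only [Multiset.mem_add, Multiset.mem_map, Multiset.mem_replicate]
      rintro x (⟨y, -, rfl⟩ | ⟨-, rfl⟩) <;> omega
    ⟨⟨_, fun hx => hc.trans_le (hge _ hx), by
        rw [Multiset.sum_add, Multiset.sum_map_add, Multiset.map_id', Multiset.map_const',
          Multiset.sum_replicate, Multiset.sum_replicate, q.1.parts_sum, add_assoc, ← add_nsmul,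
          Nat.add_sub_cancel' q.2, smul_eq_mul, mul_comm]⟩,
      by rw [Multiset.card_add, Multiset.card_map, Multiset.card_replicate,
        Nat.add_sub_cancel' q.2],
      hge⟩
  left_inv := by
    rintro ⟨p, hcard, hge⟩
    refine Subtype.ext (Nat.Partition.ext ?_)
    simp only [ofSums_parts]
    have hsplit : (p.parts.filter (c < ·)).card + (p.parts.filter (¬ c < ·)).card = j := by
      rw [← Multiset.card_add, Multiset.filter_add_not, hcard]
    rw [Multiset.filter_ne_zero_map_tsub _ hge, Multiset.map_add_map_tsub_filter_lt,
      Multiset.card_map, show j - (p.parts.filter (c < ·)).card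
      = (p.parts.filter (¬ c < ·)).card by omega, ← Multiset.filter_not_lt_eq_replicate _ hge,
      Multiset.filter_add_not]
  right_inv := by
    rintro ⟨q, hq⟩
    refine Subtype.ext (Nat.Partition.ext ?_)
    simp only [ofSums_parts, Multiset.map_add, Multiset.map_map, Function.comp_def,
      Nat.add_sub_cancel, Multiset.map_id', Multiset.map_replicate, Nat.sub_self,
      Multiset.filter_add]
    rw [Multiset.filter_eq_self.2 fun x hx => (q.parts_pos hx).ne',
      Multiset.filter_eq_nil.2 fun x hx => by simp [Multiset.eq_of_mem_replicate hx], add_zero]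

lemma card_card_parts_eq_and_ge {c : ℕ} (hc : 0 < c) (j n : ℕ) :
    #{p : (n + c * j).Partition | p.parts.card = j ∧ ∀ x ∈ p.parts, c ≤ x} =
      #{q : n.Partition | q.parts.card ≤ j} := by
  simpa only [Fintype.card_subtype] using Fintype.card_congr (subNatPartsEquiv hc j n)

def consOneEquiv (j n : ℕ) :
    {p : n.Partition // (p.parts.filter (1 < ·)).card = j} ≃
      {p : (n + 1).Partition // 1 ∈ p.parts ∧ (p.parts.filter (1 < ·)).card = j} :=
  ((partitionWithPartEquiv (n := n + 1) le_rfl (by omega)).symm.subtypeEquiv fun q => by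
    rw [partitionWithPartEquiv_symm_apply_parts, Multiset.filter_cons_of_neg _ (lt_irrefl 1)]).trans
    (Equiv.subtypeSubtypeEquivSubtypeInter _ _)

lemma card_card_filter_one_lt_eq_succ (j n : ℕ) :
    #{p : (n + 1).Partition | (p.parts.filter (1 < ·)).card = j} =
      #{p : n.Partition | (p.parts.filter (1 < ·)).card = j} +
        #{p : (n + 1).Partition | p.parts.card = j ∧ ∀ x ∈ p.parts, 2 ≤ x} := by
  have hwith : #{p : (n + 1).Partition | (p.parts.filter (1 < ·)).card = j ∧ 1 ∈ p.parts} =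
      #{p : n.Partition | (p.parts.filter (1 < ·)).card = j} := by
    simp only [and_comm, ← Fintype.card_subtype]
    exact (Fintype.card_congr (consOneEquiv j n)).symm
  have hwithout (p : (n + 1).Partition) :
      (p.parts.filter (1 < ·)).card = j ∧ 1 ∉ p.parts ↔
        p.parts.card = j ∧ ∀ x ∈ p.parts, 2 ≤ x := by
    have hone : 1 ∉ p.parts ↔ ∀ x ∈ p.parts, 2 ≤ x :=
      ⟨fun h x hx => Nat.one_lt_iff_ne_zero_and_ne_one.2 ⟨(p.parts_pos hx).ne', fun e => h (e ▸ hx)⟩,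
        fun h h1 => (h 1 h1).not_gt one_lt_two⟩
    rw [hone]
    exact and_congr_left fun h => by rw [(Multiset.filter_eq_self (p := (1 < ·))).2 h]
  rw [← card_filter_add_card_filter_not (fun p : (n + 1).Partition => 1 ∈ p.parts),
    filter_filter, filter_filter, hwith, filter_congr fun p _ => hwithout p]

end Nat.Partition

noncomputable def boundedLengthGF (j : ℕ) : ℚ⟦X⟧ :=
  mk fun n => (#{p : n.Partition | p.parts.card ≤ j} : ℚ)

noncomputable def bigPartsGF (j : ℕ) : ℚ⟦X⟧ :=
  mk fun n => (#{p : n.Partition | (p.parts.filter (1 < ·)).card = j} : ℚ)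

lemma mk_card_card_parts_eq_and_ge {c : ℕ} (hc : 0 < c) (j : ℕ) :
    mk (fun n => (#{p : n.Partition | p.parts.card = j ∧ ∀ x ∈ p.parts, c ≤ x} : ℚ)) =
      X ^ (c * j) * boundedLengthGF j := by
  refine mk_eq_X_pow_mul (fun n hn => ?_) (fun n => ?_)
  · rw [Nat.cast_eq_zero, card_eq_zero, filter_eq_empty_iff]
    rintro p - ⟨hcard, hge⟩
    have := p.card_parts_nsmul_le hge
    rw [hcard, smul_eq_mul, mul_comm] at this
    exact this.not_gt hn
  · rw [Nat.Partition.card_card_parts_eq_and_ge hc, boundedLengthGF, coeff_mk]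

lemma boundedLengthGF_zero : boundedLengthGF 0 = 1 := by
  ext (_ | n)
  · simp [boundedLengthGF]
  · simp only [boundedLengthGF, coeff_mk, coeff_one, Nat.le_zero, Multiset.card_eq_zero,
      Nat.add_one_ne_zero, if_false, Nat.cast_eq_zero, card_eq_zero, filter_eq_empty_iff]
    intro p _ h
    simpa [h] using p.parts_sum

lemma boundedLengthGF_succ (j : ℕ) :
    boundedLengthGF (j + 1) = boundedLengthGF j + X ^ (j + 1) * boundedLengthGF (j + 1) := by
  have h := mk_card_card_parts_eq_and_ge one_pos (j + 1)
  rw [one_mul] at h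
  rw [← h]
  ext n
  simp only [boundedLengthGF, map_add, coeff_mk]
  rw [card_filter_le_succ, Nat.cast_add,
    filter_congr fun p _ => and_iff_left_of_imp fun _ _ => p.parts_pos]

lemma boundedLengthGF_mul_prod (j : ℕ) : boundedLengthGF j * ∏ i ∈ Icc 1 j, (1 - X ^ i) = 1 := by
  induction j with
  | zero => simp [boundedLengthGF_zero]
  | succ j ih =>
    rw [prod_Icc_succ_top (by omega)]
    linear_combination (∏ i ∈ Icc 1 j, (1 - X ^ i)) * boundedLengthGF_succ j + ih

lemma one_sub_X_mul_bigPartsGF (j : ℕ) :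
    (1 - X) * bigPartsGF j = X ^ (2 * j) * boundedLengthGF j := by
  rw [← mk_card_card_parts_eq_and_ge two_pos]
  ext (_ | n)
  · simp [bigPartsGF]
  · rw [sub_mul, one_mul, map_sub, coeff_succ_X_mul, bigPartsGF, coeff_mk, coeff_mk, coeff_mk,
      Nat.Partition.card_card_filter_one_lt_eq_succ]
    push_cast
    ring

lemma coeff_hookGF (k l n : ℕ) :
    coeff n (hookGF k l) = #{p : n.Partition | (p.parts.filter (l < ·)).card ≤ k} := by
  simp only [hookGF, coeff_mk, InHook, Nat.card_eq_fintype_card, Fintype.card_subtype]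

lemma hookGF_zero_one : hookGF 0 1 = bigPartsGF 0 := by
  ext n
  simp only [coeff_hookGF, bigPartsGF, coeff_mk, Nat.le_zero]

lemma hookGF_succ_one (k : ℕ) : hookGF (k + 1) 1 = hookGF k 1 + bigPartsGF (k + 1) := by
  ext n
  simp only [coeff_hookGF, bigPartsGF, map_add, coeff_mk, card_filter_le_succ, Nat.cast_add]

lemma one_sub_X_mul_hookGF_one_mul_prod (k : ℕ) :
    (1 - X) * hookGF k 1 * ∏ i ∈ Icc 1 (k + 1), (1 - X ^ i) =
      1 - X + X ^ (k + 2) * (1 - X ^ k) := by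
  induction k with
  | zero => simp [hookGF_zero_one, one_sub_X_mul_bigPartsGF, boundedLengthGF_zero]
  | succ k ih =>
    rw [hookGF_succ_one, prod_Icc_succ_top (by omega)]
    linear_combination (1 - X ^ (k + 2)) * ih +
      ((∏ i ∈ Icc 1 (k + 1), (1 - X ^ i)) * (1 - X ^ (k + 2))) * one_sub_X_mul_bigPartsGF (k + 1) +
      (X ^ (2 * (k + 1)) * (1 - X ^ (k + 2))) * boundedLengthGF_mul_prod (k + 1)

lemma hookGF_one (k : ℕ) :
    hookGF k 1 = (1 + X ^ (k + 2) * ∑ j ∈ range k, (X : ℚ⟦X⟧) ^ j) *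
      ∏ i ∈ Icc 1 (k + 1), (1 - (X : ℚ⟦X⟧) ^ i)⁻¹ := by
  set P := ∏ i ∈ Icc 1 (k + 1), (1 - (X : ℚ⟦X⟧) ^ i)
  set Q := ∏ i ∈ Icc 1 (k + 1), (1 - (X : ℚ⟦X⟧) ^ i)⁻¹
  have hPQ : P * Q = 1 := by
    rw [← prod_mul_distrib]
    exact prod_eq_one fun i hi => one_sub_X_pow_mul_inv (by simp at hi; omega)
  have hX : (1 - X : ℚ⟦X⟧) ≠ 0 := fun h => by simpa using congrArg constantCoeff h
  have hP : hookGF k 1 * P = 1 + X ^ (k + 2) * ∑ j ∈ range k, (X : ℚ⟦X⟧) ^ j := by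
    refine mul_left_cancel₀ hX ?_
    rw [← mul_assoc, one_sub_X_mul_hookGF_one_mul_prod]
    linear_combination (-X ^ (k + 2)) * mul_neg_geom_sum (X : ℚ⟦X⟧) k
  linear_combination (-hookGF k 1) * hPQ + Q * hP

theorem stmt14 (k : ℕ) :
    A k 1 = 1 + (PowerSeries.X : PowerSeries ℚ) ^ (k + 2) * gaussBinom k 1 ∧
    A k 1 = 1 + (PowerSeries.X : PowerSeries ℚ) ^ (k + 2)
              * ∑ j ∈ Finset.range k, (PowerSeries.X : PowerSeries ℚ) ^ j ∧
    hookGF k 1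
      = (1 + (PowerSeries.X : PowerSeries ℚ) ^ (k + 2)
              * ∑ j ∈ Finset.range k, (PowerSeries.X : PowerSeries ℚ) ^ j)
        * ∏ i ∈ Finset.Icc 1 (k + 1), (1 - (PowerSeries.X : PowerSeries ℚ) ^ i)⁻¹ := by
  refine ⟨A_one_right k, ?_, hookGF_one k⟩
  rw [A_one_right, gaussBinom_one_right]
end
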